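/- Under the implicit LU recursion the search vectors form a unit upper triangular matrix: for every i, the vector p_i = H_iᵀ e_i satisfies (p_i)_i = 1 and (p_i)_k = 0 for every k > i; hence the n×m matrix P_m = [p₁,…,p_m] is unit upper triangular. -/
import Mathlib


open Matrix

/-- Under the implicit LU recursion the search vectors `p i = (H i)ᵀ e_i` satisfy
`(p i)_i = 1` and `(p i)_k = 0` for `k > i`; hence the `n × m` matrix
`P_m = [p 1, …, p m]` is unit upper triangular. -/
theorem implicit_lu_search_vectors_unit_upper_triangular
    (m n : ℕ) (hmn : m ≤ n) (A : Matrix (Fin m) (Fin n) ℝ)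
    (H : ℕ → Matrix (Fin n) (Fin n) ℝ) (p : ℕ → Fin n → ℝ)
    (hH1 : H 1 = 1)
    (hδ : ∀ j (h1 : 1 ≤ j) (h2 : j ≤ m),
      Pi.single (⟨j - 1, by omega⟩ : Fin n) 1 ⬝ᵥ
        (H j *ᵥ (Aᵀ *ᵥ Pi.single (⟨j - 1, by omega⟩ : Fin m) 1)) ≠ 0)
    (hupd : ∀ j (h1 : 1 ≤ j) (h2 : j ≤ m),
      H (j + 1) = H j -
        (Pi.single (⟨j - 1, by omega⟩ : Fin n) 1 ⬝ᵥ
          (H j *ᵥ (Aᵀ *ᵥ Pi.single (⟨j - 1, by omega⟩ : Fin m) 1)))⁻¹ •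
        vecMulVec (H j *ᵥ (Aᵀ *ᵥ Pi.single (⟨j - 1, by omega⟩ : Fin m) 1))
          (Pi.single (⟨j - 1, by omega⟩ : Fin n) 1 ᵥ* H j))
    (hp : ∀ i (h1 : 1 ≤ i) (h2 : i ≤ m),
      p i = (H i)ᵀ *ᵥ Pi.single (⟨i - 1, by omega⟩ : Fin n) 1) :
    (∀ i (h1 : 1 ≤ i) (h2 : i ≤ m),
      p i ⟨i - 1, by omega⟩ = 1 ∧ ∀ k : Fin n, i ≤ (k : ℕ) → p i k = 0) ∧
    (∀ c : Fin m, p ((c : ℕ) + 1) (Fin.castLE hmn c) = 1) ∧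
    (∀ (r : Fin n) (c : Fin m), (c : ℕ) < (r : ℕ) → p ((c : ℕ) + 1) r = 0) := by
  -- Key invariant: for `1 ≤ j ≤ m`, the columns of `H j` with index ≥ j-1 are identity columns.
  have key : ∀ j, 1 ≤ j → j ≤ m → ∀ a k : Fin n, j - 1 ≤ (k : ℕ) →
      H j a k = if a = k then 1 else 0 := by
    intro j
    induction j with
    | zero => omega
    | succ j IH =>
      intro _ hjm a k hk
      rcases Nat.eq_or_lt_of_le (Nat.one_le_iff_ne_zero.mpr (Nat.succ_ne_zero j)) with h1 | h1
      · -- j + 1 = 1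
        obtain rfl : j = 0 := by omega
        rw [hH1, Matrix.one_apply]
      · -- j ≥ 1
        have hj1 : 1 ≤ j := by omega
        have hjm' : j ≤ m := by omega
        rw [hupd j hj1 hjm']
        simp only [Matrix.sub_apply, Matrix.smul_apply, Matrix.vecMulVec_apply,
          smul_eq_mul]
        have hk' : j - 1 ≤ (k : ℕ) := by omega
        have hrow : (Pi.single (⟨j - 1, by omega⟩ : Fin n) 1 ᵥ* H j) k = 0 := by
          simp only [Matrix.vecMul, dotProduct,
            Pi.single_apply]
          rw [Finset.sum_eq_single (⟨j - 1, by omega⟩ : Fin n)]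
          · simp only [if_pos rfl, one_mul]
            rw [IH hj1 hjm' _ k hk']
            have : (⟨j - 1, by omega⟩ : Fin n) ≠ k := by
              intro h
              have := congrArg Fin.val h
              simp at this
              omega
            simp [this]
          · intro b _ hb
            simp [hb]
          · simp
        rw [hrow, IH hj1 hjm' a k hk']
        ring
  have hpv : ∀ i (h1 : 1 ≤ i) (h2 : i ≤ m) (k : Fin n),
      p i k = H i ⟨i - 1, by omega⟩ k := by
    intro i h1 h2 k
    rw [hp i h1 h2]
    simp only [Matrix.mulVec, dotProduct, Matrix.transpose_apply, Pi.single_apply]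
    rw [Finset.sum_eq_single (⟨i - 1, by omega⟩ : Fin n)]
    · simp
    · intro b _ hb; simp [hb]
    · simp
  have main : ∀ i (h1 : 1 ≤ i) (h2 : i ≤ m),
      p i ⟨i - 1, by omega⟩ = 1 ∧ ∀ k : Fin n, i ≤ (k : ℕ) → p i k = 0 := by
    intro i h1 h2
    constructor
    · rw [hpv i h1 h2, key i h1 h2 _ _ (le_refl _)]
      simp
    · intro k hk
      rw [hpv i h1 h2, key i h1 h2 _ k (by omega)]
      have : (⟨i - 1, by omega⟩ : Fin n) ≠ k := by
        intro h
        have := congrArg Fin.val h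
        simp at this
        omega
      simp [this]
  refine ⟨main, ?_, ?_⟩
  · intro c
    have h := (main ((c : ℕ) + 1) (by omega) (by omega)).1
    exact h
  · intro r c hcr
    exact (main ((c : ℕ) + 1) (by omega) (by omega)).2 r (by omega)
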